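/- arXiv:1005.3133 — 4 statements merged into one kernel-verified Lean document; each statement's English description precedes it below -/
import Mathlib

section
/- Let H be a commutative bialgebra over a commutative ring k, and let f, g : H → H be bialgebra morphisms. Then (id ⋆ f) ∘ (id ⋆ g) = id ⋆ (f ⋆ g ⋆ (f ∘ g)), where ⋆ denotes the convolution product on linear endomorphisms of H. -/
/-!
For commutative `H`, the convolution `φ ⋆ ψ` of two algebra endomorphisms is again an algebra
endomorphism, so postcomposing with it distributes over convolution. Applied to `id ⋆ f` this
gives `(id ⋆ f) ∘ (id ⋆ g) = (id ⋆ f) ⋆ ((id ⋆ f) ∘ g)`, and since `g` is a coalgebra map,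
`(id ⋆ f) ∘ g = g ⋆ (f ∘ g)`. Associativity of convolution finishes the proof.
-/

open scoped TensorProduct

variable {k H : Type*}

/-- The convolution product of two linear endomorphisms of a bialgebra:
`u ⋆ v = m ∘ (u ⊗ v) ∘ Δ`. -/
noncomputable def conv [CommRing k] [Ring H] [Bialgebra k H]
    (u v : H →ₗ[k] H) : H →ₗ[k] H :=
  (LinearMap.mul' k H).comp ((TensorProduct.map u v).comp (Coalgebra.comul))

open WithConv

section Ring

variable [CommRing k] [Ring H] [Bialgebra k H]

lemma conv_eq_ofConv_mul (u v : H →ₗ[k] H) : conv u v = (toConv u * toConv v).ofConv := rfl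

lemma conv_assoc (u v w : H →ₗ[k] H) : conv (conv u v) w = conv u (conv v w) := by
  simp only [conv_eq_ofConv_mul, toConv_ofConv, mul_assoc]

lemma conv_comp_coalgHom (u v : H →ₗ[k] H) (h : H →ₗc[k] H) :
    (conv u v).comp h.toLinearMap = conv (u.comp h.toLinearMap) (v.comp h.toLinearMap) :=
  LinearMap.convMul_comp_coalgHom_distrib (toConv u) (toConv v) h

end Ring

lemma conv_algHom_comp_conv [CommRing k] [CommRing H] [Bialgebra k H] (φ ψ : H →ₐ[k] H)
    (u v : H →ₗ[k] H) :
    (conv φ.toLinearMap ψ.toLinearMap).comp (conv u v) =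
      conv ((conv φ.toLinearMap ψ.toLinearMap).comp u)
        ((conv φ.toLinearMap ψ.toLinearMap).comp v) :=
  LinearMap.algHom_comp_convMul_distrib (toConv φ * toConv ψ).ofConv (toConv u) (toConv v)

/-- For a commutative bialgebra `H` and bialgebra morphisms `f, g : H → H`, we have
`(id ⋆ f) ∘ (id ⋆ g) = id ⋆ (f ⋆ g ⋆ (f ∘ g))`. -/
theorem troesch_stmt3 [CommRing k] [CommRing H] [Bialgebra k H]
    (f g : H →ₐc[k] H) :
    (conv (LinearMap.id) f.toLinearMap).comp (conv (LinearMap.id) g.toLinearMap) =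
      conv (LinearMap.id)
        (conv (conv f.toLinearMap g.toLinearMap)
          (f.toLinearMap.comp g.toLinearMap)) :=
  calc (conv LinearMap.id f.toLinearMap).comp (conv LinearMap.id g.toLinearMap)
      = conv (conv LinearMap.id f.toLinearMap)
          ((conv LinearMap.id f.toLinearMap).comp g.toLinearMap) :=
        conv_algHom_comp_conv (AlgHom.id k H) f LinearMap.id g.toLinearMap
    _ = conv (conv LinearMap.id f.toLinearMap)
          (conv g.toLinearMap (f.toLinearMap.comp g.toLinearMap)) :=
        congrArg _ (conv_comp_coalgHom LinearMap.id f.toLinearMap g)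
    _ = _ := by rw [conv_assoc, ← conv_assoc f.toLinearMap]
end

section
/- Let k be a commutative ring, U a k-module, and φ, ψ : U → U commuting k-linear maps. For each d ≥ 0 define φ_d : Sym(U) → Sym(U) on products of elements of U by φ_d(x_1 ⋯ x_n) = ∑_{K ⊆ {1,…,n}, |K| = d} ( ∏_{j ∉ K} x_j ) · ( ∏_{j ∈ K} φ(x_j) ), and similarly ψ_e using ψ. Then φ_d ∘ ψ_e = ψ_e ∘ φ_d for all d, e ≥ 0. -/
/-- Let `U` be a module over a commutative ring `k` and `φ, ψ : U → U` commuting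
linear maps.  On the symmetric algebra `Sym(U)` (modelled by a commutative
`k`-algebra `S` with `ι : U →ₗ[k] S` whose products of images span), the maps
`φ_d` defined by `φ_d(x_1 ⋯ x_n) = ∑_{|K| = d} (∏_{j∉K} x_j)·(∏_{j∈K} φ(x_j))`
and the analogous maps `ψ_e` commute: `φ_d ∘ ψ_e = ψ_e ∘ φ_d`. -/
theorem troesch_stmt6 (k : Type*) [CommRing k]
    (U : Type*) [AddCommGroup U] [Module k U]
    (φ ψ : U →ₗ[k] U) (hcomm : φ.comp ψ = ψ.comp φ)
    (S : Type*) [CommRing S] [Algebra k S] (ι : U →ₗ[k] S)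
    (hspan : Submodule.span k
      {s : S | ∃ (n : ℕ) (x : Fin n → U), s = ∏ i, ι (x i)} = ⊤)
    (Φ Ψ : ℕ → (S →ₗ[k] S))
    (hΦ : ∀ (d n : ℕ) (x : Fin n → U),
      Φ d (∏ i, ι (x i)) =
        ∑ K ∈ Finset.univ.powersetCard d,
          (∏ j ∈ Kᶜ, ι (x j)) * ∏ j ∈ K, ι (φ (x j)))
    (hΨ : ∀ (e n : ℕ) (x : Fin n → U),
      Ψ e (∏ i, ι (x i)) =
        ∑ K ∈ Finset.univ.powersetCard e,
          (∏ j ∈ Kᶜ, ι (x j)) * ∏ j ∈ K, ι (ψ (x j))) :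
    ∀ d e : ℕ, (Φ d).comp (Ψ e) = (Ψ e).comp (Φ d) := by
  intro d e
  apply LinearMap.ext_on hspan
  rintro s ⟨n, x, rfl⟩
  have key : ∀ (f : U →ₗ[k] U) (K : Finset (Fin n)) (y : Fin n → U),
      (∏ j ∈ Kᶜ, ι (y j)) * ∏ j ∈ K, ι (f (y j))
        = ∏ j, ι (if j ∈ K then f (y j) else y j) := by
    intro f K y
    rw [← Finset.prod_mul_prod_compl K, mul_comm]
    congr 1
    · exact Finset.prod_congr rfl fun j hj => by simp [hj]
    · exact Finset.prod_congr rfl fun j hj => by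
        simp [Finset.mem_compl.mp hj]
  simp only [LinearMap.comp_apply]
  calc Φ d (Ψ e (∏ i, ι (x i)))
      = ∑ K ∈ Finset.univ.powersetCard e, ∑ L ∈ Finset.univ.powersetCard d,
          ∏ j, ι (if j ∈ L then φ (if j ∈ K then ψ (x j) else x j)
                  else (if j ∈ K then ψ (x j) else x j)) := by
        rw [hΨ, map_sum]
        refine Finset.sum_congr rfl fun K _ => ?_
        rw [key ψ K x, hΦ]
        exact Finset.sum_congr rfl fun L _ => key φ L _
    _ = ∑ L ∈ Finset.univ.powersetCard d, ∑ K ∈ Finset.univ.powersetCard e,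
          ∏ j, ι (if j ∈ K then ψ (if j ∈ L then φ (x j) else x j)
                  else (if j ∈ L then φ (x j) else x j)) := by
        rw [Finset.sum_comm]
        refine Finset.sum_congr rfl fun K _ => Finset.sum_congr rfl fun L _ =>
          Finset.prod_congr rfl fun j _ => ?_
        congr 1
        by_cases hK : j ∈ K <;> by_cases hL : j ∈ L <;> simp [hK, hL]
        exact DFunLike.congr_fun hcomm (x j)
    _ = Ψ e (Φ d (∏ i, ι (x i))) := by
        rw [hΦ, map_sum]
        refine (Finset.sum_congr rfl fun L _ => ?_).symm
        rw [key φ L x, hΨ]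
        exact Finset.sum_congr rfl fun K _ => key ψ K _
end

section
/- Let k be a field of prime characteristic p, U a k-vector space, and φ : U → U a linear map with φ^p = 0. With φ_d : Sym(U) → Sym(U) defined by φ_d(x_1 ⋯ x_n) = ∑_{|K| = d} (∏_{j∉K} x_j)·(∏_{j∈K} φ(x_j)), each φ_d with d ≥ 1 satisfies φ_d^p = 0. -/
/-!
Let the monomial `X^c` in variables `X_1, …, X_n` stand for `∏ j, ι (φ^(c j) (x j))`. Under this
linear correspondence `φ_d` becomes multiplication by the elementary symmetric polynomial `e_d`,
so `φ_d^p (x_1 ⋯ x_n)` corresponds to `e_d^p`. In characteristic `p` the Frobenius gives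
`e_d^p = ∑_{|K| = d} ∏_{j ∈ K} X_j^p`, and since `d ≥ 1` each of these monomials applies
`φ^p = 0` to some factor.
-/

open MvPolynomial Finset

section

variable {R U S : Type*} [CommSemiring R] [AddCommMonoid U] [Module R U]
  [CommSemiring S] [Module R S] (φ : U →ₗ[R] U) (ι : U →ₗ[R] S) {n : ℕ} (x : Fin n → U)

noncomputable def monomialIterate : MvPolynomial (Fin n) R →ₗ[R] S :=
  (basisMonomials (Fin n) R).constr R fun c => ∏ j, ι ((φ ^ c j) (x j))

theorem monomialIterate_monomial_one (c : Fin n →₀ ℕ) :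
    monomialIterate φ ι x (monomial c 1) = ∏ j, ι ((φ ^ c j) (x j)) := by
  simpa [monomialIterate] using
    (basisMonomials (Fin n) R).constr_basis R (fun c => ∏ j, ι ((φ ^ c j) (x j))) c

theorem monomialIterate_one : monomialIterate φ ι x 1 = ∏ j, ι (x j) := by
  simpa using monomialIterate_monomial_one φ ι x 0

theorem monomialIterate_monomial_one_eq_zero {N : ℕ} (hφ : φ ^ N = 0) {c : Fin n →₀ ℕ}
    {j : Fin n} (hj : N ≤ c j) : monomialIterate φ ι x (monomial c 1) = 0 := by
  rw [monomialIterate_monomial_one]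
  refine prod_eq_zero (mem_univ j) ?_
  rw [pow_eq_zero_of_le hj hφ, LinearMap.zero_apply, map_zero]

theorem prod_compl_mul_prod_iterate (K : Finset (Fin n)) (c : Fin n →₀ ℕ) :
    (∏ j ∈ Kᶜ, ι ((φ ^ c j) (x j))) * ∏ j ∈ K, ι (φ ((φ ^ c j) (x j))) =
      ∏ j, ι ((φ ^ (c + ∑ i ∈ K, Finsupp.single i 1 : Fin n →₀ ℕ) j) (x j)) := by
  rw [← Finset.prod_mul_prod_compl K, mul_comm]
  congr 1 <;> refine Finset.prod_congr rfl fun j hj => ?_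
  · simp [Finsupp.single_apply, hj, pow_succ']
  · simp_all [Finsupp.single_apply]

variable {d : ℕ} {Φ : S →ₗ[R] S}

theorem map_monomialIterate (hΦ : ∀ (n : ℕ) (x : Fin n → U),
      Φ (∏ i, ι (x i)) = ∑ K ∈ univ.powersetCard d, (∏ j ∈ Kᶜ, ι (x j)) * ∏ j ∈ K, ι (φ (x j)))
    (q : MvPolynomial (Fin n) R) :
    Φ (monomialIterate φ ι x q) = monomialIterate φ ι x (q * esymm (Fin n) R d) := by
  suffices Φ ∘ₗ monomialIterate φ ι x =
      monomialIterate φ ι x ∘ₗ LinearMap.mulRight R (esymm (Fin n) R d) from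
    LinearMap.congr_fun this q
  refine (basisMonomials (Fin n) R).ext fun c => ?_
  simp only [coe_basisMonomials, LinearMap.comp_apply, LinearMap.mulRight_apply,
    esymm_eq_sum_monomial, Finset.mul_sum, monomial_mul, mul_one, map_sum,
    monomialIterate_monomial_one, hΦ, prod_compl_mul_prod_iterate]

theorem pow_apply_monomialIterate (hΦ : ∀ (n : ℕ) (x : Fin n → U),
      Φ (∏ i, ι (x i)) = ∑ K ∈ univ.powersetCard d, (∏ j ∈ Kᶜ, ι (x j)) * ∏ j ∈ K, ι (φ (x j)))
    (m : ℕ) (q : MvPolynomial (Fin n) R) :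
    (Φ ^ m) (monomialIterate φ ι x q) = monomialIterate φ ι x (q * esymm (Fin n) R d ^ m) := by
  induction m with
  | zero => simp
  | succ m ih =>
    rw [pow_succ', Module.End.mul_apply, ih, map_monomialIterate φ ι x hΦ, pow_succ, mul_assoc]

theorem monomialIterate_esymm_pow_eq_zero (p : ℕ) [ExpChar R p] (hφ : φ ^ p = 0) (hd : 1 ≤ d) :
    monomialIterate φ ι x (esymm (Fin n) R d ^ p) = 0 := by
  rw [esymm_eq_sum_monomial, sum_pow_char, map_sum]
  refine Finset.sum_eq_zero fun K hK => ?_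
  obtain ⟨j, hj⟩ : K.Nonempty := by
    rw [← Finset.card_pos, (Finset.mem_powersetCard.mp hK).2]; omega
  rw [monomial_pow, one_pow]
  refine monomialIterate_monomial_one_eq_zero φ ι x hφ (j := j) ?_
  simp [Finsupp.single_apply, hj]

end

/-- Let `k` be a field of prime characteristic `p`, `U` a `k`-vector space and
`φ : U → U` with `φ^p = 0`.  On the symmetric algebra `Sym(U)` (modelled by a
commutative `k`-algebra `S` with `ι : U →ₗ[k] S` whose products of images span),
the maps `φ_d` defined by
`φ_d(x_1 ⋯ x_n) = ∑_{|K| = d} (∏_{j∉K} x_j)·(∏_{j∈K} φ(x_j))` satisfy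
`φ_d^p = 0` for every `d ≥ 1`. -/
theorem troesch_stmt7 (k : Type*) [Field k] (p : ℕ) [Fact p.Prime] [CharP k p]
    (U : Type*) [AddCommGroup U] [Module k U]
    (φ : U →ₗ[k] U) (hφ : φ ^ p = 0)
    (S : Type*) [CommRing S] [Algebra k S] (ι : U →ₗ[k] S)
    (hspan : Submodule.span k
      {s : S | ∃ (n : ℕ) (x : Fin n → U), s = ∏ i, ι (x i)} = ⊤)
    (Φ : ℕ → (S →ₗ[k] S))
    (hΦ : ∀ (d n : ℕ) (x : Fin n → U),
      Φ d (∏ i, ι (x i)) =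
        ∑ K ∈ Finset.univ.powersetCard d,
          (∏ j ∈ Kᶜ, ι (x j)) * ∏ j ∈ K, ι (φ (x j))) :
    ∀ d : ℕ, 1 ≤ d → (Φ d : Module.End k S) ^ p = 0 := by
  intro d hd
  refine LinearMap.ext_on hspan ?_
  rintro _ ⟨n, x, rfl⟩
  rw [← monomialIterate_one φ ι x, pow_apply_monomialIterate φ ι x (hΦ d), one_mul,
    monomialIterate_esymm_pow_eq_zero φ ι x p hφ hd, LinearMap.zero_apply]
end

section
/- Let p be a prime and let (C*, d) be a p-complex of modules over a ring, i.e. a nonnegatively graded module with maps d : C^i → C^{i+1} satisfying d^p = 0. Fix 1 ≤ s < p and suppose that for every i > 0, ker(d^s : C^i → C^{i+s}) = im(d^{p−s} : C^{i−p+s} → C^i) (where C^j = 0 for j < 0). Then the contracted complex C^0 →^{d^s} C^s →^{d^{p−s}} C^p →^{d^s} C^{p+s} → ⋯, obtained by alternately applying d^s and d^{p−s}, is an exact complex in all positive positions. -/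
/-- Let `(C^*, d)` be a `p`-complex (here modelled as a module `M` with a
grading by submodules `V i`, vanishing in negative degrees, and an endomorphism
`d` of degree `1` with `d^p = 0`).  Fix `1 ≤ s < p` and suppose that for every
`i > 0`, `ker(d^s : C^i → C^{i+s}) = im(d^{p−s} : C^{i−p+s} → C^i)`.  Then the
contracted complex `C^0 → C^s → C^p → C^{p+s} → ⋯` (alternately applying `d^s`
and `d^{p−s}`) is exact in all positive positions. -/
theorem troesch_stmt12 (R : Type*) [Ring R] (M : Type*) [AddCommGroup M] [Module R M]
    (p : ℕ) (hp : p.Prime)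
    (V : ℤ → Submodule R M) (hneg : ∀ j : ℤ, j < 0 → V j = ⊥)
    (d : Module.End R M) (hdeg : ∀ (i : ℤ), ∀ x ∈ V i, d x ∈ V (i + 1))
    (hdp : d ^ p = 0)
    (s : ℕ) (hs1 : 1 ≤ s) (hsp : s < p)
    (hexact : ∀ i : ℤ, 0 < i → ∀ x ∈ V i,
      ((d ^ s) x = 0 ↔ ∃ y ∈ V (i - (p : ℤ) + (s : ℤ)), (d ^ (p - s)) y = x)) :
    (∀ m : ℕ, 1 ≤ m → ∀ x ∈ V ((m : ℤ) * p), (d ^ s) x = 0 →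
        ∃ y ∈ V (((m : ℤ) - 1) * p + s), (d ^ (p - s)) y = x) ∧
      (∀ m : ℕ, ∀ x ∈ V ((m : ℤ) * p + s), (d ^ (p - s)) x = 0 →
        ∃ y ∈ V ((m : ℤ) * p), (d ^ s) y = x) := by
  have hs0 : 0 < s := hs1
  have hpp : 0 < p := hp.pos
  have hcomp : ∀ (a b : ℕ) (x : M), (d ^ (a + b)) x = (d ^ a) ((d ^ b) x) := by
    intro a b x
    rw [pow_add]
    rfl
  have hpow : ∀ (n : ℕ) (i : ℤ), ∀ x ∈ V i, (d ^ n) x ∈ V (i + n) := by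
    intro n
    induction n with
    | zero => intro i x hx; simpa using hx
    | succ n ih =>
      intro i x hx
      have h1 : d x ∈ V (i + 1) := hdeg i x hx
      have h2 := ih (i + 1) (d x) h1
      have e : i + 1 + (n : ℤ) = i + ((n : ℕ) + 1 : ℕ) := by push_cast; ring
      rw [e] at h2
      have e2 : (d ^ (n + 1)) x = (d ^ n) (d x) := by
        rw [pow_succ]; rfl
      rw [e2]
      exact h2
  have hzero : ∀ (jj : ℤ), jj < 0 → ∀ x ∈ V jj, x = 0 := by
    intro jj hjj x hx
    rw [hneg jj hjj] at hx
    simpa using hx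
  -- descent lemma
  have desc : ∀ (q r0 : ℕ), r0 < s → ∀ j : ℤ, 0 < j → ∀ x ∈ V j,
      (d ^ (r0 + q * s)) x = 0 → r0 + q * s ≤ p →
      ∃ w ∈ V (j + ((r0 + q * s : ℕ) : ℤ) - (p : ℤ)),
        (d ^ r0) (x - (d ^ (p - (r0 + q * s))) w) = 0 := by
    intro q
    induction q with
    | zero =>
      intro r0 hr0 j hj x hx hd0 hle
      refine ⟨0, Submodule.zero_mem _, ?_⟩
      simpa using hd0
    | succ q ih =>
      intro r0 hr0 j hj x hx hd0 hle
      have hR : r0 + (q + 1) * s = (r0 + q * s) + s := by ring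
      set n := r0 + q * s with hn
      rw [hR] at hd0 hle
      rw [hR]
      have hns : n + s ≤ p := hle
      -- u = d^n x
      have hu : (d ^ n) x ∈ V (j + (n : ℤ)) := hpow n j x hx
      have hdu : (d ^ s) ((d ^ n) x) = 0 := by
        rw [← hcomp]
        have e : s + n = n + s := by ring
        rw [e]; exact hd0
      have hjn : (0 : ℤ) < j + (n : ℤ) := by positivity
      obtain ⟨v, hv, hdv⟩ := (hexact (j + (n : ℤ)) hjn ((d ^ n) x) hu).mp hdu
      -- x₁ = x - d^{p-(n+s)} v
      have hvdeg : (d ^ (p - (n + s))) v ∈ V j := by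
        have := hpow (p - (n + s)) _ v hv
        have e : j + (n : ℤ) - (p : ℤ) + (s : ℤ) + ((p - (n + s) : ℕ) : ℤ) = j := by
          omega
        rwa [e] at this
      have hx1 : x - (d ^ (p - (n + s))) v ∈ V j := Submodule.sub_mem _ hx hvdeg
      have hdx1 : (d ^ n) (x - (d ^ (p - (n + s))) v) = 0 := by
        rw [map_sub, ← hcomp]
        have e : n + (p - (n + s)) = p - s := by omega
        rw [e, hdv]
        simp
      obtain ⟨w₁, hw₁, hdw₁⟩ := ih r0 hr0 j hj _ hx1 hdx1 (by omega)
      refine ⟨v + (d ^ s) w₁, ?_, ?_⟩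
      · apply Submodule.add_mem
        · have e : j + (n : ℤ) - (p : ℤ) + (s : ℤ) = j + ((n + s : ℕ) : ℤ) - (p : ℤ) := by
            omega
          rwa [e] at hv
        · have := hpow s _ w₁ hw₁
          have e : j + ((n : ℕ) : ℤ) - (p : ℤ) + (s : ℤ) = j + ((n + s : ℕ) : ℤ) - (p : ℤ) := by
            omega
          rwa [e] at this
      · have e1 : (d ^ (p - (n + s))) (v + (d ^ s) w₁)
            = (d ^ (p - (n + s))) v + (d ^ (p - n)) w₁ := by
          rw [map_add, ← hcomp]
          have e : p - (n + s) + s = p - n := by omega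
          rw [e]
        rw [e1]
        have e2 : x - ((d ^ (p - (n + s))) v + (d ^ (p - n)) w₁)
            = (x - (d ^ (p - (n + s))) v) - (d ^ (p - n)) w₁ := by abel
        rw [e2]
        exact hdw₁
  -- main lemma
  have main : ∀ N : ℕ, ∀ j : ℤ, j ≤ (N : ℤ) → 0 < j → ∀ k : ℕ, k < s →
      (∀ l : ℕ, 1 ≤ l → l + k + 1 ≤ s → j ≠ (l : ℤ) * ((p : ℤ) - (s : ℤ))) →
      ∀ x ∈ V j, (d ^ ((p - s) + (k * (p % s)) % s)) x = 0 →
      ∃ y ∈ V (j - (s : ℤ) + (((k * (p % s)) % s : ℕ) : ℤ)),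
        (d ^ (s - (k * (p % s)) % s)) y = x := by
    intro N
    induction N with
    | zero => intro j hjN hj; omega
    | succ N ihN =>
      intro j hjN hj k hk hside x hx hdx
      set r := (k * (p % s)) % s with hrdef
      have hrs : r < s := Nat.mod_lt _ hs0
      have hRp : (p - s) + r ≤ p := by omega
      set q := ((p - s) + r) / s with hq
      set rp := ((p - s) + r) % s with hrp
      have hqr : rp + q * s = (p - s) + r := Nat.mod_add_div' ((p - s) + r) s
      have hrps : rp < s := Nat.mod_lt _ hs0
      have hrpR : rp ≤ (p - s) + r := Nat.mod_le _ _
      -- identity: rp = ((k+1) * (p % s)) % s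
      have hps : (p - s) % s = p % s := by
        conv_rhs => rw [show p = (p - s) + s by omega, Nat.add_mod_right]
      have hr' : rp = ((k + 1) * (p % s)) % s := by
        have key : (p - s + k * (p % s) % s) ≡ ((k + 1) * (p % s)) [MOD s] := by
          calc p - s + k * (p % s) % s
              ≡ p - s + k * (p % s) [MOD s] := Nat.ModEq.add_left _ (Nat.mod_modEq _ _)
            _ ≡ p % s + k * (p % s) [MOD s] := by
                refine Nat.ModEq.add_right _ ?_
                show (p - s) % s = (p % s) % s
                rw [hps, Nat.mod_mod_of_dvd _ dvd_rfl]
            _ = (k + 1) * (p % s) := by ring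
        rw [hrp]
        exact key
      obtain ⟨w, hw, hdw⟩ := desc q rp hrps j hj x hx
        (by rw [hqr]; exact hdx) (by rw [hqr]; exact hRp)
      rw [hqr] at hw hdw
      have hPR : p - ((p - s) + r) = s - r := by omega
      rw [hPR] at hdw
      have hwV : w ∈ V (j - (s : ℤ) + (r : ℤ)) := by
        have e : j + (((p - s) + r : ℕ) : ℤ) - (p : ℤ) = j - (s : ℤ) + (r : ℤ) := by omega
        rwa [e] at hw
      by_cases hrp0 : rp = 0
      · refine ⟨w, hwV, ?_⟩
        have : x - (d ^ (s - r)) w = 0 := by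
          have := hdw
          rw [hrp0, pow_zero] at this
          simpa using this
        have := sub_eq_zero.mp this
        exact this.symm
      · -- rp ≠ 0, so k + 2 ≤ s
        have hk2 : k + 2 ≤ s := by
          by_contra hcon
          have hk1 : k + 1 = s := by omega
          rw [hk1] at hr'
          have : (s * (p % s)) % s = 0 := Nat.mul_mod_right s _
          omega
        have hdsx' : (d ^ s) (x - (d ^ (s - r)) w) = 0 := by
          have e : (d ^ s) (x - (d ^ (s - r)) w)
              = (d ^ (s - rp)) ((d ^ rp) (x - (d ^ (s - r)) w)) := by
            rw [← hcomp]
            congr 2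
            omega
          rw [e, hdw, map_zero]
        have hx'V : x - (d ^ (s - r)) w ∈ V j := by
          apply Submodule.sub_mem _ hx
          have := hpow (s - r) _ w hwV
          have e : j - (s : ℤ) + (r : ℤ) + ((s - r : ℕ) : ℤ) = j := by omega
          rwa [e] at this
        obtain ⟨w₂, hw₂, hdw₂⟩ := (hexact j hj _ hx'V).mp hdsx'
        by_cases hjlow : j - (p : ℤ) + (s : ℤ) < 0
        · -- w₂ = 0, so x' = 0
          have hw20 : w₂ = 0 := hzero _ hjlow w₂ hw₂
          refine ⟨w, hwV, ?_⟩
          rw [hw20] at hdw₂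
          simp only [map_zero] at hdw₂
          have := sub_eq_zero.mp hdw₂.symm
          exact this.symm
        · by_cases hjeq : j - (p : ℤ) + (s : ℤ) = 0
          · exfalso
            exact hside 1 le_rfl (by omega) (by push_cast; omega)
          · have hj' : (0 : ℤ) < j - (p : ℤ) + (s : ℤ) := by omega
            have hd₂ : (d ^ ((p - s) + ((k + 1) * (p % s)) % s)) w₂ = 0 := by
              rw [← hr']
              have e : (p - s) + rp = rp + (p - s) := by ring
              rw [e, hcomp, hdw₂]
              exact hdw
            obtain ⟨z, hz, hdz⟩ := ihN (j - (p : ℤ) + (s : ℤ)) (by omega) hj' (k + 1)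
              (by omega)
              (by
                intro l hl1 hl2 heq
                apply hside (l + 1) (by omega) (by omega)
                push_cast at heq ⊢
                linear_combination heq)
              w₂ hw₂ hd₂
            rw [← hr'] at hz hdz
            refine ⟨w + (d ^ ((p - s) + r - rp)) z, ?_, ?_⟩
            · apply Submodule.add_mem _ hwV
              have := hpow ((p - s) + r - rp) _ z hz
              have e : j - (p : ℤ) + (s : ℤ) - (s : ℤ) + (rp : ℤ)
                  + (((p - s) + r - rp : ℕ) : ℤ) = j - (s : ℤ) + (r : ℤ) := by omega
              rwa [e] at this
            · rw [map_add, ← hcomp]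
              have e : (s - r) + ((p - s) + r - rp) = (p - s) + (s - rp) := by omega
              rw [e, hcomp, hdz, hdw₂]
              abel
  constructor
  · intro m hm x hx hdx
    have hi : (0 : ℤ) < (m : ℤ) * (p : ℤ) := by
      have h1 : (1 : ℤ) ≤ (m : ℤ) := by exact_mod_cast hm
      have h2 : (0 : ℤ) < (p : ℤ) := by exact_mod_cast hpp
      nlinarith
    obtain ⟨y, hy, hdy⟩ := (hexact ((m : ℤ) * (p : ℤ)) hi x hx).mp hdx
    refine ⟨y, ?_, hdy⟩
    have e : (m : ℤ) * (p : ℤ) - (p : ℤ) + (s : ℤ) = ((m : ℤ) - 1) * (p : ℤ) + (s : ℤ) := by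
      ring
    rwa [e] at hy
  · intro m x hx hdx
    have hj : (0 : ℤ) < (m : ℤ) * (p : ℤ) + (s : ℤ) := by positivity
    have hjN : (m : ℤ) * (p : ℤ) + (s : ℤ) ≤ ((m * p + s : ℕ) : ℤ) := le_of_eq (by push_cast; ring)
    have hside : ∀ l : ℕ, 1 ≤ l → l + 0 + 1 ≤ s →
        (m : ℤ) * (p : ℤ) + (s : ℤ) ≠ (l : ℤ) * ((p : ℤ) - (s : ℤ)) := by
      intro l hl1 hl2 heq
      have hdvd : ((p : ℤ)) ∣ (s : ℤ) * ((l : ℤ) + 1) := ⟨(l : ℤ) - (m : ℤ), by linear_combination heq⟩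
      have hpint : Prime ((p : ℤ)) := Nat.prime_iff_prime_int.mp hp
      rcases (hpint.dvd_mul.mp hdvd) with h | h
      · have : (p : ℤ) ≤ (s : ℤ) := Int.le_of_dvd (by exact_mod_cast hs0) h
        omega
      · have : (p : ℤ) ≤ (l : ℤ) + 1 := Int.le_of_dvd (by positivity) h
        omega
    have hdx' : (d ^ ((p - s) + (0 * (p % s)) % s)) x = 0 := by
      simpa using hdx
    obtain ⟨y, hy, hdy⟩ := main (m * p + s) _ hjN hj 0 hs0 hside x hx hdx'
    refine ⟨y, ?_, ?_⟩
    · have e : (m : ℤ) * (p : ℤ) + (s : ℤ) - (s : ℤ) + (((0 * (p % s)) % s : ℕ) : ℤ)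
          = (m : ℤ) * (p : ℤ) := by simp
      rwa [e] at hy
    · have e : s - (0 * (p % s)) % s = s := by simp
      rwa [e] at hdy
end
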